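/- (Reduction in users' total energy cost.) Assume some r' ≥ 0 satisfies f^No(r') ≥ ξ and let r‡ be the largest r ≥ 0 with f^No(r) ≥ ξ. If (r*,π*) is an optimal solution of Problem-Ins, then users' total energy cost under the optimal insurance contract is no larger than under the no-insurance benchmark: Σ_k Σ_t (π_k^{*t} + p)·D_k^t ≤ Σ_t p·E[s^t(r‡,Θ^t)] + Σ_t Σ_k V_k^t·E[D_k^t − d_k^t(r‡,Θ^t)]. -/

import Mathlib

/-!
At capacity `r‡`, the full-reimbursement premium `π_k^t = (V_k^t − p)·E[1 − s^t/D_a^t]` (the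
upper end of the IR condition) satisfies IC and IR, and its premium revenue equals the expected
reimbursement, so `f^Ins(r‡, π) = f^No(r‡) ≥ ξ`: it is feasible for Problem-Ins. Under it every
user pays exactly his expected cost without insurance at `r‡`, and the optimal contract collects
no more premium than this feasible one.
-/

open MeasureTheory Finset

noncomputable section

variable {Ω : Type*} [MeasurableSpace Ω] {T : Type*} [Fintype T] {n : ℕ}

/-- Supply at time `t` under capacity `r`: `s^t(r,Θ^t) = min(D_a^t, r·Θ^t)`. -/
def supplyF (Da : T → ℝ) (Θ : T → Ω → ℝ) (r : ℝ) (t : T) (ω : Ω) : ℝ :=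
  min (Da t) (r * Θ t ω)

/-- Energy allocated to a user with demand profile `Di`:
`d_i^t(r,Θ^t) = (D_i^t/D_a^t)·s^t(r,Θ^t)`. -/
def allocF (Da : T → ℝ) (Θ : T → Ω → ℝ) (Di : T → ℝ) (r : ℝ) (t : T) (ω : Ω) : ℝ :=
  Di t / Da t * supplyF Da Θ r t ω

/-- Expected lost fraction `E[1 - s^t(r,Θ^t)/D_a^t]`. -/
def lostFrac (μ : Measure Ω) (Da : T → ℝ) (Θ : T → Ω → ℝ) (r : ℝ) (t : T) : ℝ :=
  ∫ ω, (1 - supplyF Da Θ r t ω / Da t) ∂μ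

/-- Cost `CU_i(m)` of a user with demand `Di` and values of lost load `Vi`
who chooses contract item `m`. -/
def CUins (μ : Measure Ω) (Da : T → ℝ) (Θ : T → Ω → ℝ) (p r : ℝ)
    (π V : Fin (n + 1) → T → ℝ) (Di Vi : T → ℝ) (m : Fin (n + 1)) : ℝ :=
  (∑ t, π m t * Di t) + (∑ t, p * ∫ ω, allocF Da Θ Di r t ω ∂μ)
    + (∑ t, ∫ ω, Vi t * (Di t - allocF Da Θ Di r t ω) ∂μ)
    - ∑ t, ∫ ω, (V m t - p) * (Di t - allocF Da Θ Di r t ω) ∂μ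

/-- Cost `CU_i(0)` of a user with demand `Di` and values of lost load `Vi`
who buys no insurance. -/
def CUnoins (μ : Measure Ω) (Da : T → ℝ) (Θ : T → Ω → ℝ) (p r : ℝ)
    (Di Vi : T → ℝ) : ℝ :=
  (∑ t, p * ∫ ω, allocF Da Θ Di r t ω ∂μ)
    + ∑ t, ∫ ω, Vi t * (Di t - allocF Da Θ Di r t ω) ∂μ

/-- IC condition: `π_k^t − π_m^t = (V_k^t − V_m^t)·E[1 − s^t/D_a^t]` for all `t, k, m`. -/
def ICcond (μ : Measure Ω) (Da : T → ℝ) (Θ : T → Ω → ℝ) (r : ℝ)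
    (π V : Fin (n + 1) → T → ℝ) : Prop :=
  ∀ t k m, π k t - π m t = (V k t - V m t) * lostFrac μ Da Θ r t

/-- IR condition: `0 ≤ π_k^t ≤ (V_k^t − p)·E[1 − s^t/D_a^t]` for all `t, k`. -/
def IRcond (μ : Measure Ω) (Da : T → ℝ) (Θ : T → Ω → ℝ) (p r : ℝ)
    (π V : Fin (n + 1) → T → ℝ) : Prop :=
  ∀ t k, 0 ≤ π k t ∧ π k t ≤ (V k t - p) * lostFrac μ Da Θ r t

/-- Total reimbursement `C_s^t(r,Θ^t) = Σ_k (V_k^t − p)(D_k^t − d_k^t)`. -/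
def CsF (Da : T → ℝ) (Θ : T → Ω → ℝ) (D V : Fin (n + 1) → T → ℝ) (p r : ℝ)
    (t : T) (ω : Ω) : ℝ :=
  ∑ k, (V k t - p) * (D k t - allocF Da Θ (D k) r t ω)

/-- The utility's profit `f^Ins(r,π)` under the insurance contract. -/
def fIns (μ : Measure Ω) (Da : T → ℝ) (Θ : T → Ω → ℝ) (D V : Fin (n + 1) → T → ℝ)
    (p c : ℝ) (r : ℝ) (π : Fin (n + 1) → T → ℝ) : ℝ :=
  (∑ k, ∑ t, π k t * D k t) + (∑ t, p * ∫ ω, supplyF Da Θ r t ω ∂μ) - c * r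
    - ∑ t, ∫ ω, CsF Da Θ D V p r t ω ∂μ

/-- The utility's profit `f^No(r)` without insurance. -/
def fNo (μ : Measure Ω) (Da : T → ℝ) (Θ : T → Ω → ℝ) (p c : ℝ) (r : ℝ) : ℝ :=
  (∑ t, p * ∫ ω, supplyF Da Θ r t ω ∂μ) - c * r

/-- The social cost `C^SO(r) = c_r·r + Σ_t E[C_s^t(r,Θ^t)]`. -/
def CSO (μ : Measure Ω) (Da : T → ℝ) (Θ : T → Ω → ℝ) (D V : Fin (n + 1) → T → ℝ)
    (p c : ℝ) (r : ℝ) : ℝ :=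
  c * r + ∑ t, ∫ ω, CsF Da Θ D V p r t ω ∂μ

/-- `g(r) := −Σ_t p·E[s^t] + c_r·r + Σ_t E[C_s^t] + ξ`. -/
def gReg (μ : Measure Ω) (Da : T → ℝ) (Θ : T → Ω → ℝ) (D V : Fin (n + 1) → T → ℝ)
    (p c ξ : ℝ) (r : ℝ) : ℝ :=
  -(∑ t, p * ∫ ω, supplyF Da Θ r t ω ∂μ) + c * r
    + (∑ t, ∫ ω, CsF Da Θ D V p r t ω ∂μ) + ξ

/-- `f^l(r) = Σ_t Σ_k D_k^t·(V_k^t − V_1^t)·E[1 − s^t/D_a^t]`. -/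
def fL (μ : Measure Ω) (Da : T → ℝ) (Θ : T → Ω → ℝ) (D V : Fin (n + 1) → T → ℝ)
    (r : ℝ) : ℝ :=
  ∑ t, ∑ k, D k t * (V k t - V 0 t) * lostFrac μ Da Θ r t

/-- `f^u(r) = Σ_t Σ_k D_k^t·(V_k^t − p)·E[1 − s^t/D_a^t]`. -/
def fU (μ : Measure Ω) (Da : T → ℝ) (Θ : T → Ω → ℝ) (D V : Fin (n + 1) → T → ℝ)
    (p : ℝ) (r : ℝ) : ℝ :=
  ∑ t, ∑ k, D k t * (V k t - p) * lostFrac μ Da Θ r t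

/-- Feasibility for Problem-Ins: `r ≥ 0`, regulated profit `f^Ins(r,π) ≥ ξ`, IC and IR. -/
def InsFeasible (μ : Measure Ω) (Da : T → ℝ) (Θ : T → Ω → ℝ)
    (D V : Fin (n + 1) → T → ℝ) (p c ξ : ℝ) (r : ℝ) (π : Fin (n + 1) → T → ℝ) : Prop :=
  0 ≤ r ∧ ξ ≤ fIns μ Da Θ D V p c r π ∧ ICcond μ Da Θ r π V ∧ IRcond μ Da Θ p r π V

/-- Optimality for Problem-Ins: feasible and minimizing the total premium
`Σ_k Σ_t π_k^t D_k^t` among all feasible points. -/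
def InsOptimal (μ : Measure Ω) (Da : T → ℝ) (Θ : T → Ω → ℝ)
    (D V : Fin (n + 1) → T → ℝ) (p c ξ : ℝ) (r : ℝ) (π : Fin (n + 1) → T → ℝ) : Prop :=
  InsFeasible μ Da Θ D V p c ξ r π ∧
    ∀ r' π', InsFeasible μ Da Θ D V p c ξ r' π' →
      (∑ k, ∑ t, π k t * D k t) ≤ ∑ k, ∑ t, π' k t * D k t


section PointwiseInTime

variable {ι : Type*} {μ : Measure Ω} {Da : ι → ℝ} {Θ : ι → Ω → ℝ} {r : ℝ} {t : ι}

theorem integrable_supplyF [IsFiniteMeasure μ] (hΘ : Measurable (Θ t)) (hr : 0 ≤ r)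
    (hΘ0 : ∀ ω, 0 ≤ Θ t ω) : Integrable (supplyF Da Θ r t) μ := by
  refine Integrable.of_bound (measurable_const.min (measurable_const.mul hΘ)).aestronglyMeasurable
    |Da t| (Filter.Eventually.of_forall fun ω => ?_)
  have hrΘ : 0 ≤ r * Θ t ω := mul_nonneg hr (hΘ0 ω)
  rw [Real.norm_eq_abs, abs_le]
  exact ⟨le_min (neg_abs_le _) (by linarith [abs_nonneg (Da t)]),
    (min_le_left _ _).trans (le_abs_self _)⟩

theorem lostFrac_nonneg (hDa : 0 ≤ Da t) : 0 ≤ lostFrac μ Da Θ r t :=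
  integral_nonneg fun _ => sub_nonneg.2 (div_le_one_of_le₀ (min_le_left _ _) hDa)

theorem integral_supplyF [IsProbabilityMeasure μ] (hint : Integrable (supplyF Da Θ r t) μ)
    (hDa : Da t ≠ 0) : ∫ ω, supplyF Da Θ r t ω ∂μ = Da t * (1 - lostFrac μ Da Θ r t) := by
  rw [lostFrac, integral_sub (integrable_const 1) (hint.div_const _), integral_const,
    probReal_univ, one_smul, integral_div, sub_sub_cancel, mul_div_cancel₀ _ hDa]

theorem integral_sub_allocF (Di : ι → ℝ) :
    ∫ ω, (Di t - allocF Da Θ Di r t ω) ∂μ = Di t * lostFrac μ Da Θ r t := by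
  rw [lostFrac, ← integral_const_mul]
  exact integral_congr_ae (Filter.Eventually.of_forall fun ω => by simp only [allocF]; ring)

theorem integral_CsF (D V : Fin (n + 1) → ι → ℝ) (p : ℝ) :
    ∫ ω, CsF Da Θ D V p r t ω ∂μ = (∑ k, (V k t - p) * D k t) * lostFrac μ Da Θ r t := by
  have hCs : CsF Da Θ D V p r t =
      fun ω => (∑ k, (V k t - p) * D k t) * (1 - supplyF Da Θ r t ω / Da t) := by
    funext ω
    simp only [CsF, allocF, Finset.sum_mul]
    exact Finset.sum_congr rfl fun k _ => by ring
  rw [hCs, integral_const_mul, lostFrac]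

end PointwiseInTime

section FullPremium

variable {μ : Measure Ω} {Da : T → ℝ} {Θ : T → Ω → ℝ} {D V : Fin (n + 1) → T → ℝ} {p c ξ r : ℝ}

def fullPremium (μ : Measure Ω) (Da : T → ℝ) (Θ : T → Ω → ℝ) (V : Fin (n + 1) → T → ℝ)
    (p r : ℝ) : Fin (n + 1) → T → ℝ :=
  fun k t => (V k t - p) * lostFrac μ Da Θ r t

theorem fIns_fullPremium :
    fIns μ Da Θ D V p c r (fullPremium μ Da Θ V p r) = fNo μ Da Θ p c r := by
  have hprem : ∑ k, ∑ t, fullPremium μ Da Θ V p r k t * D k t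
      = ∑ t, ∫ ω, CsF Da Θ D V p r t ω ∂μ := by
    rw [Finset.sum_comm]
    refine Finset.sum_congr rfl fun t _ => ?_
    rw [integral_CsF, Finset.sum_mul]
    exact Finset.sum_congr rfl fun k _ => by simp only [fullPremium]; ring
  rw [fIns, fNo, hprem]
  ring

theorem insFeasible_fullPremium (hr : 0 ≤ r) (hξ : ξ ≤ fNo μ Da Θ p c r)
    (hpV : ∀ t k, p ≤ V k t) (hDa : ∀ t, 0 ≤ Da t) :
    InsFeasible μ Da Θ D V p c ξ r (fullPremium μ Da Θ V p r) := by
  refine ⟨hr, by rwa [fIns_fullPremium], fun t k m => ?_, fun t k => ?_⟩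
  · simp only [fullPremium]
    ring
  · exact ⟨mul_nonneg (sub_nonneg.2 (hpV t k)) (lostFrac_nonneg (hDa t)), le_rfl⟩

theorem sum_fullPremium_add_mul [IsProbabilityMeasure μ]
    (hint : ∀ t, Integrable (supplyF Da Θ r t) μ) (hDa : ∀ t, Da t = ∑ k, D k t)
    (hDa0 : ∀ t, Da t ≠ 0) :
    ∑ k, ∑ t, (fullPremium μ Da Θ V p r k t + p) * D k t =
      (∑ t, p * ∫ ω, supplyF Da Θ r t ω ∂μ) +
        ∑ t, ∑ k, V k t * ∫ ω, (D k t - allocF Da Θ (D k) r t ω) ∂μ := by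
  rw [Finset.sum_comm, ← Finset.sum_add_distrib]
  refine Finset.sum_congr rfl fun t _ => ?_
  simp only [integral_supplyF (hint t) (hDa0 t), integral_sub_allocF, fullPremium]
  rw [hDa t, Finset.sum_mul, Finset.mul_sum, ← Finset.sum_add_distrib]
  exact Finset.sum_congr rfl fun k _ => by ring

end FullPremium

theorem stmt17_general
    (μ : Measure Ω) [IsProbabilityMeasure μ]
    (Θ : T → Ω → ℝ) (hΘmeas : ∀ t, Measurable (Θ t))
    (hΘ01 : ∀ t ω, 0 ≤ Θ t ω ∧ Θ t ω ≤ 1)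
    (D V : Fin (n + 1) → T → ℝ) (hD : ∀ k t, 0 < D k t)
    (hVmono : ∀ t, Monotone fun k => V k t)
    (Da : T → ℝ) (hDa : ∀ t, Da t = ∑ k, D k t)
    (p : ℝ) (hpV : ∀ t, p ≤ V 0 t)
    (c : ℝ) (ξ : ℝ)
    (rdd : ℝ) (hrdd : IsGreatest {r : ℝ | 0 ≤ r ∧ ξ ≤ fNo μ Da Θ p c r} rdd)
    (rstar : ℝ) (πstar : Fin (n + 1) → T → ℝ)
    (hopt : InsOptimal μ Da Θ D V p c ξ rstar πstar) :
    (∑ k, ∑ t, (πstar k t + p) * D k t) ≤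
      (∑ t, p * ∫ ω, supplyF Da Θ rdd t ω ∂μ) +
        ∑ t, ∑ k, V k t * ∫ ω, (D k t - allocF Da Θ (D k) rdd t ω) ∂μ := by
  obtain ⟨⟨hr, hξr⟩, -⟩ := hrdd
  have hDa_pos : ∀ t, 0 < Da t := fun t =>
    hDa t ▸ Finset.sum_pos (fun k _ => hD k t) Finset.univ_nonempty
  have hpV' : ∀ t k, p ≤ V k t := fun t k => (hpV t).trans (hVmono t (Fin.zero_le k))
  have hint : ∀ t, Integrable (supplyF Da Θ rdd t) μ := fun t =>
    integrable_supplyF (hΘmeas t) hr fun ω => (hΘ01 t ω).1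
  have hpremium := hopt.2 rdd _ (insFeasible_fullPremium hr hξr hpV' fun t => (hDa_pos t).le)
  rw [← sum_fullPremium_add_mul hint hDa fun t => (hDa_pos t).ne']
  simp only [add_mul, Finset.sum_add_distrib]
  linarith

/-- reduction in users' total energy cost: users' total energy cost
under the optimal insurance contract is no larger than under the no-insurance
benchmark. -/
theorem stmt17
    (μ : Measure Ω) [IsProbabilityMeasure μ] [Nonempty T]
    (Θ : T → Ω → ℝ) (hΘmeas : ∀ t, Measurable (Θ t))
    (hΘ01 : ∀ t ω, 0 ≤ Θ t ω ∧ Θ t ω ≤ 1)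
    (D V : Fin (n + 1) → T → ℝ) (hD : ∀ k t, 0 < D k t)
    (hVmono : ∀ t, Monotone fun k => V k t)
    (Da : T → ℝ) (hDa : ∀ t, Da t = ∑ k, D k t)
    (p : ℝ) (hp0 : 0 ≤ p) (hpV : ∀ t, p ≤ V 0 t)
    (c : ℝ) (hc : 0 < c) (ξ : ℝ) (hξ : 0 ≤ ξ)
    (hfeas : ∃ r' : ℝ, 0 ≤ r' ∧ ξ ≤ fNo μ Da Θ p c r')
    (rdd : ℝ) (hrdd : IsGreatest {r : ℝ | 0 ≤ r ∧ ξ ≤ fNo μ Da Θ p c r} rdd)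
    (rstar : ℝ) (πstar : Fin (n + 1) → T → ℝ)
    (hopt : InsOptimal μ Da Θ D V p c ξ rstar πstar) :
    (∑ k, ∑ t, (πstar k t + p) * D k t) ≤
      (∑ t, p * ∫ ω, supplyF Da Θ rdd t ω ∂μ) +
        ∑ t, ∑ k, V k t * ∫ ω, (D k t - allocF Da Θ (D k) rdd t ω) ∂μ :=
  stmt17_general μ Θ hΘmeas hΘ01 D V hD hVmono Da hDa p hpV c ξ rdd hrdd rstar πstar hopt

end
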